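/- arXiv:1012.3052 — 5 statements merged into one kernel-verified Lean document; each statement's English description precedes it below -/
import Mathlib

section
/- Let {⟨e_{k,i}⟩ᵢ₌₁ⁿ : k ∈ ℕ} be a countable family of pairwise totally incompatible orthonormal bases of an n-dimensional Hilbert space and let Obs = ⋃ₖ 𝔄(⟨e_{k,i}⟩). Then for every function f : ℕ → {1,…,n}, the map λ_f : Obs → ℝ defined by λ_f(c·id) = c and λ_f(Σᵢ aᵢ P_{e_{k,i}}) = a_{f(k)} for non-scalar elements is well-defined and satisfies: λ_f(A) ∈ spectrum(A) for all A ∈ Obs. -/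
/-- The rank-one orthogonal projection onto the span of a unit vector `v`. -/
noncomputable def rankOne {n : ℕ} (v : EuclideanSpace ℂ (Fin n)) :
    EuclideanSpace ℂ (Fin n) →ₗ[ℂ] EuclideanSpace ℂ (Fin n) :=
  ((innerSL ℂ v).smulRight v).toLinearMap

/-- The Abelian algebra generated by an orthonormal basis: real linear
combinations of the rank-one projections onto the basis vectors. -/
noncomputable def mkcAlgebra {n : ℕ}
    (e : OrthonormalBasis (Fin n) ℂ (EuclideanSpace ℂ (Fin n))) :
    Set (EuclideanSpace ℂ (Fin n) →ₗ[ℂ] EuclideanSpace ℂ (Fin n)) :=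
  {A | ∃ a : Fin n → ℝ, A = ∑ i, a i • rankOne (e i)}

lemma mysum_apply {n : ℕ} (e : OrthonormalBasis (Fin n) ℂ (EuclideanSpace ℂ (Fin n)))
    (a : Fin n → ℝ) (j : Fin n) :
    (∑ i, a i • rankOne (e i)) (e j) = (a j : ℂ) • e j := by
  have horth := orthonormal_iff_ite.mp e.orthonormal
  rw [LinearMap.sum_apply]
  have h1 : ∀ i, (a i • rankOne (e i)) (e j) = (if i = j then (a i : ℂ) else 0) • e i := by
    intro i
    rw [LinearMap.smul_apply]
    show a i • (((innerSL ℂ (e i)).smulRight (e i)) (e j)) = _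
    rw [ContinuousLinearMap.smulRight_apply, innerSL_apply_apply, horth i j]
    by_cases h : i = j <;> simp [h, Complex.real_smul]
  simp only [h1]
  simp [Finset.sum_ite_eq]

lemma coeff_eq {n : ℕ} (e : OrthonormalBasis (Fin n) ℂ (EuclideanSpace ℂ (Fin n)))
    (a : Fin n → ℝ) (j : Fin n) :
    (inner (𝕜 := ℂ) (e j) ((∑ i, a i • rankOne (e i)) (e j))).re = a j := by
  have horth := orthonormal_iff_ite.mp e.orthonormal
  rw [mysum_apply, inner_smul_right, horth j j]
  simp

lemma basis_ne_zero {n : ℕ} (e : OrthonormalBasis (Fin n) ℂ (EuclideanSpace ℂ (Fin n)))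
    (j : Fin n) : e j ≠ 0 := by
  have := e.orthonormal.1 j
  intro h0
  rw [h0, norm_zero] at this
  norm_num at this

lemma mem_spec {n : ℕ} (A : EuclideanSpace ℂ (Fin n) →ₗ[ℂ] EuclideanSpace ℂ (Fin n))
    (v : EuclideanSpace ℂ (Fin n)) (μ : ℝ) (hv : v ≠ 0) (h : A v = (μ : ℂ) • v) :
    (μ : ℂ) ∈ spectrum ℂ A := by
  rw [← Module.End.hasEigenvalue_iff_mem_spectrum]
  exact Module.End.hasEigenvalue_of_hasEigenvector
    ⟨Module.End.mem_eigenspace_iff.mpr h, hv⟩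

lemma scal_inj {n : ℕ} (e0 : OrthonormalBasis (Fin n) ℂ (EuclideanSpace ℂ (Fin n)))
    (i0 : Fin n) {c c' : ℝ}
    (h : c • (1 : EuclideanSpace ℂ (Fin n) →ₗ[ℂ] EuclideanSpace ℂ (Fin n)) = c' • 1) :
    c = c' := by
  have hne := basis_ne_zero e0 i0
  have := congrArg (fun B => B (e0 i0)) h
  simp only [LinearMap.smul_apply, Module.End.one_apply] at this
  have h2 : (c - c') • e0 i0 = 0 := by rw [sub_smul, this, sub_self]
  rcases smul_eq_zero.mp h2 with h3 | h3
  · linarith [sub_eq_zero.mp (by exact_mod_cast h3)]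
  · exact absurd h3 hne

/-- Given a countable family of pairwise totally incompatible bases (expressed by the
condition that the generated algebras intersect only in the scalars) and
`Obs = ⋃ₖ 𝔄(⟨e_{k,i}⟩)`, every `f : ℕ → Fin n` gives a well-defined coloring
`λ_f` on `Obs`, with `λ_f(c·id) = c`, `λ_f(Σᵢ aᵢ P_{e_{k,i}}) = a_{f(k)}` on
non-scalar elements, whose values lie in the spectrum. -/
theorem mkc_coloring_welldefined_and_in_spectrum {n : ℕ}
    (e : ℕ → OrthonormalBasis (Fin n) ℂ (EuclideanSpace ℂ (Fin n)))
    (hinc : ∀ k l, k ≠ l →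
      mkcAlgebra (e k) ∩ mkcAlgebra (e l) = {A | ∃ c : ℝ, A = c • (1 : _)})
    (Obs : Set (EuclideanSpace ℂ (Fin n) →ₗ[ℂ] EuclideanSpace ℂ (Fin n)))
    (hObs : Obs = ⋃ k, mkcAlgebra (e k))
    (f : ℕ → Fin n) :
    ∃ lam : (EuclideanSpace ℂ (Fin n) →ₗ[ℂ] EuclideanSpace ℂ (Fin n)) → ℝ,
      (∀ c : ℝ, lam (c • (1 : _)) = c) ∧
      (∀ k, ∀ a : Fin n → ℝ,
        (¬ ∃ c : ℝ, (∑ i, a i • rankOne (e k i)) = c • (1 : _)) →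
        lam (∑ i, a i • rankOne (e k i)) = a (f k)) ∧
      (∀ A ∈ Obs, (lam A : ℂ) ∈ spectrum ℂ A) := by
  classical
  set E := EuclideanSpace ℂ (Fin n)
  have i0 : Fin n := f 0
  refine ⟨fun A =>
    if hs : ∃ c : ℝ, A = c • (1 : E →ₗ[ℂ] E) then hs.choose
    else if hk : ∃ k, A ∈ mkcAlgebra (e k) then
      (inner (𝕜 := ℂ) (e hk.choose (f hk.choose)) (A (e hk.choose (f hk.choose)))).re
    else 0, ?_, ?_, ?_⟩
  · intro c
    beta_reduce
    have hs : ∃ c' : ℝ, c • (1 : E →ₗ[ℂ] E) = c' • 1 := ⟨c, rfl⟩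
    rw [dif_pos hs]
    exact (scal_inj (e 0) i0 hs.choose_spec.symm)
  · intro k a hns
    beta_reduce
    rw [dif_neg hns]
    have hk : ∃ l, (∑ i, a i • rankOne (e k i)) ∈ mkcAlgebra (e l) := ⟨k, a, rfl⟩
    rw [dif_pos hk]
    have hkk : hk.choose = k := by
      by_contra hne
      obtain ⟨a', ha'⟩ := hk.choose_spec
      have hmem : (∑ i, a i • rankOne (e k i)) ∈ mkcAlgebra (e k) ∩ mkcAlgebra (e hk.choose) :=
        ⟨⟨a, rfl⟩, ⟨a', ha'⟩⟩
      rw [hinc k hk.choose (fun h => hne h.symm)] at hmem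
      exact hns hmem
    rw [hkk]
    exact coeff_eq (e k) a (f k)
  · intro A hA
    rw [hObs] at hA
    obtain ⟨k, a, ha⟩ := by simpa [mkcAlgebra] using hA
    by_cases hs : ∃ c : ℝ, A = c • (1 : E →ₗ[ℂ] E)
    · beta_reduce
      rw [dif_pos hs]
      have : A (e 0 i0) = ((hs.choose : ℂ)) • e 0 i0 := by
        conv_lhs => rw [hs.choose_spec]
        simp [Complex.real_smul]
      exact mem_spec A (e 0 i0) hs.choose (basis_ne_zero (e 0) i0) this
    · beta_reduce
      rw [dif_neg hs]
      have hk : ∃ l, A ∈ mkcAlgebra (e l) := ⟨k, a, ha⟩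
      rw [dif_pos hk]
      obtain ⟨a', ha'⟩ := hk.choose_spec
      set l := hk.choose
      set j := f l
      have happ : A (e l j) = ((a' j : ℂ)) • e l j := by rw [ha']; exact mysum_apply (e l) a' j
      have hco : (inner (𝕜 := ℂ) (e l j) (A (e l j))).re = a' j := by
        rw [ha']; exact coeff_eq (e l) a' j
      rw [hco]
      exact mem_spec A (e l j) (a' j) (basis_ne_zero (e l) j) happ
end

section
/- With Obs as in the MKC construction (union of the algebras of a family of pairwise totally incompatible bases), the set Λ of all colorings λ : Obs → ℝ — functions satisfying λ(A) ∈ spectrum(A) and λ(p(A)) = p(λ(A)) for every real polynomial p and every A ∈ Obs with p(A) ∈ Obs — is in bijection with the set of functions {1,…,n}^ℕ, via f ↦ λ_f where λ_f(Σᵢ aᵢ P_{e_{k,i}}) = a_{f(k)}. -/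
/-- Application of a real polynomial to an operator, via the functional calculus
(polynomial evaluation in the endomorphism algebra). -/
noncomputable def polyApply {n : ℕ} (p : Polynomial ℝ)
    (A : EuclideanSpace ℂ (Fin n) →ₗ[ℂ] EuclideanSpace ℂ (Fin n)) :
    EuclideanSpace ℂ (Fin n) →ₗ[ℂ] EuclideanSpace ℂ (Fin n) :=
  Polynomial.aeval (R := ℂ)
    (A := Module.End ℂ (EuclideanSpace ℂ (Fin n))) A (p.map (algebraMap ℝ ℂ))

/-- The set of colorings of `Obs`: functions assigning to each observable a value
in its spectrum, compatibly with the polynomial functional calculus. -/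
noncomputable def Colorings {n : ℕ}
    (Obs : Set (EuclideanSpace ℂ (Fin n) →ₗ[ℂ] EuclideanSpace ℂ (Fin n))) :
    Set ((EuclideanSpace ℂ (Fin n) →ₗ[ℂ] EuclideanSpace ℂ (Fin n)) → ℝ) :=
  {lam | (∀ A ∈ Obs, (lam A : ℂ) ∈ spectrum ℂ A) ∧
    (∀ p : Polynomial ℝ, ∀ A ∈ Obs, polyApply p A ∈ Obs →
      lam (polyApply p A) = p.eval (lam A)) ∧
    (∀ A ∉ Obs, lam A = 0)}

open scoped InnerProductSpace

noncomputable def Dg {n : ℕ} (e : OrthonormalBasis (Fin n) ℂ (EuclideanSpace ℂ (Fin n)))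
    (a : Fin n → ℂ) : EuclideanSpace ℂ (Fin n) →ₗ[ℂ] EuclideanSpace ℂ (Fin n) :=
  ∑ i, a i • rankOne (e i)

lemma rankOne_apply {n : ℕ} (v x : EuclideanSpace ℂ (Fin n)) :
    rankOne v x = ⟪v, x⟫_ℂ • v := rfl

lemma Dg_apply_basis {n : ℕ} (e : OrthonormalBasis (Fin n) ℂ (EuclideanSpace ℂ (Fin n)))
    (a : Fin n → ℂ) (j : Fin n) : Dg e a (e j) = a j • e j := by
  classical
  have h : ∀ i, rankOne (e i) (e j) = if i = j then e i else 0 := by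
    intro i
    rw [rankOne_apply, orthonormal_iff_ite.mp e.orthonormal i j]
    split <;> simp
  simp only [Dg, LinearMap.sum_apply, LinearMap.smul_apply, h, smul_ite, smul_zero]
  simp [Finset.sum_ite_eq']

lemma Dg_one {n : ℕ} (e : OrthonormalBasis (Fin n) ℂ (EuclideanSpace ℂ (Fin n))) :
    Dg e 1 = 1 := by
  apply LinearMap.ext; intro x
  simp only [Dg, LinearMap.sum_apply, LinearMap.smul_apply, Pi.one_apply, one_smul,
    rankOne_apply, Module.End.one_apply]
  exact e.sum_repr' x

lemma Dg_ext {n : ℕ} (e : OrthonormalBasis (Fin n) ℂ (EuclideanSpace ℂ (Fin n)))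
    {A B : EuclideanSpace ℂ (Fin n) →ₗ[ℂ] EuclideanSpace ℂ (Fin n)}
    (h : ∀ j, A (e j) = B (e j)) : A = B := by
  apply e.toBasis.ext
  simpa using h

lemma Dg_injective {n : ℕ} (e : OrthonormalBasis (Fin n) ℂ (EuclideanSpace ℂ (Fin n)))
    {a b : Fin n → ℂ} (h : Dg e a = Dg e b) : a = b := by
  funext j
  have h2 : a j • e j = b j • e j := by
    rw [← Dg_apply_basis e a j, ← Dg_apply_basis e b j, h]
  exact smul_left_injective ℂ (e.orthonormal.ne_zero j) h2

lemma Dg_mul {n : ℕ} (e : OrthonormalBasis (Fin n) ℂ (EuclideanSpace ℂ (Fin n)))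
    (a b : Fin n → ℂ) : Dg e a * Dg e b = Dg e (a * b) := by
  apply Dg_ext e
  intro j
  have : (Dg e a * Dg e b) (e j) = Dg e a (Dg e b (e j)) := rfl
  rw [this, Dg_apply_basis, map_smul, Dg_apply_basis, Dg_apply_basis, smul_smul,
    Pi.mul_apply, mul_comm]

lemma Dg_add {n : ℕ} (e : OrthonormalBasis (Fin n) ℂ (EuclideanSpace ℂ (Fin n)))
    (a b : Fin n → ℂ) : Dg e a + Dg e b = Dg e (a + b) := by
  simp only [Dg, ← Finset.sum_add_distrib, Pi.add_apply, add_smul]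

lemma Dg_smul {n : ℕ} (e : OrthonormalBasis (Fin n) ℂ (EuclideanSpace ℂ (Fin n)))
    (c : ℂ) (a : Fin n → ℂ) : c • Dg e a = Dg e (c • a) := by
  simp only [Dg, Finset.smul_sum, Pi.smul_apply, smul_smul, smul_eq_mul]

lemma Dg_pow {n : ℕ} (e : OrthonormalBasis (Fin n) ℂ (EuclideanSpace ℂ (Fin n)))
    (a : Fin n → ℂ) (m : ℕ) : Dg e a ^ m = Dg e (a ^ m) := by
  induction m with
  | zero => simp [Dg_one]
  | succ m ih => rw [pow_succ, ih, Dg_mul, ← pow_succ]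

lemma aeval_Dg {n : ℕ} (e : OrthonormalBasis (Fin n) ℂ (EuclideanSpace ℂ (Fin n)))
    (a : Fin n → ℂ) (q : Polynomial ℂ) :
    Polynomial.aeval (R := ℂ) (A := Module.End ℂ (EuclideanSpace ℂ (Fin n))) (Dg e a) q
      = Dg e (fun i => q.eval (a i)) := by
  induction q using Polynomial.induction_on' with
  | add p q hp hq =>
      rw [map_add, hp, hq, Dg_add]
      congr 1; funext i; simp
  | monomial m c =>
      rw [Polynomial.aeval_monomial]
      have : algebraMap ℂ (Module.End ℂ (EuclideanSpace ℂ (Fin n))) c = c • 1 :=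
        Algebra.algebraMap_eq_smul_one c
      rw [this, Dg_pow, smul_one_mul, Dg_smul]
      simp only [Polynomial.eval_monomial]; rfl

lemma Dg_sub {n : ℕ} (e : OrthonormalBasis (Fin n) ℂ (EuclideanSpace ℂ (Fin n)))
    (a b : Fin n → ℂ) : Dg e a - Dg e b = Dg e (a - b) := by
  apply Dg_ext e; intro j
  simp [Dg_apply_basis, sub_smul]

lemma isUnit_Dg_iff {n : ℕ} (e : OrthonormalBasis (Fin n) ℂ (EuclideanSpace ℂ (Fin n)))
    (c : Fin n → ℂ) : IsUnit (Dg e c) ↔ ∀ i, c i ≠ 0 := by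
  constructor
  · intro h j hj
    obtain ⟨B, hB⟩ := h.exists_left_inv
    have h1 : (B * Dg e c) (e j) = e j := by rw [hB]; rfl
    have h2 : (B * Dg e c) (e j) = c j • B (e j) := by
      show B (Dg e c (e j)) = _
      rw [Dg_apply_basis, map_smul]
    rw [h2, hj, zero_smul] at h1
    exact e.orthonormal.ne_zero j h1.symm
  · intro h
    have h1 : Dg e c * Dg e (fun i => (c i)⁻¹) = 1 := by
      rw [Dg_mul, ← Dg_one e]
      congr 1; funext i
      exact mul_inv_cancel₀ (h i)
    have h2 : Dg e (fun i => (c i)⁻¹) * Dg e c = 1 := by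
      rw [Dg_mul, ← Dg_one e]
      congr 1; funext i
      exact inv_mul_cancel₀ (h i)
    exact ⟨⟨_, _, h1, h2⟩, rfl⟩

lemma mem_spectrum_Dg_iff {n : ℕ} (e : OrthonormalBasis (Fin n) ℂ (EuclideanSpace ℂ (Fin n)))
    (a : Fin n → ℂ) (μ : ℂ) : μ ∈ spectrum ℂ (Dg e a) ↔ ∃ i, μ = a i := by
  rw [spectrum.mem_iff]
  have h1 : algebraMap ℂ (Module.End ℂ (EuclideanSpace ℂ (Fin n))) μ - Dg e a
      = Dg e (fun i => μ - a i) := by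
    rw [Algebra.algebraMap_eq_smul_one, ← Dg_one e, Dg_smul, Dg_sub]
    congr 1; funext i; simp
  rw [h1, isUnit_Dg_iff]
  push_neg
  constructor
  · rintro ⟨i, hi⟩; exact ⟨i, by rwa [sub_eq_zero] at hi⟩
  · rintro ⟨i, hi⟩; exact ⟨i, by rwa [sub_eq_zero]⟩

lemma DgR_eq {n : ℕ} (e : OrthonormalBasis (Fin n) ℂ (EuclideanSpace ℂ (Fin n)))
    (a : Fin n → ℝ) : (∑ i, a i • rankOne (e i)) = Dg e (fun i => (a i : ℂ)) := by
  unfold Dg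
  refine Finset.sum_congr rfl fun i _ => ?_
  rw [← algebraMap_smul ℂ (a i) (rankOne (e i))]
  rfl

lemma smul_one_eq {n : ℕ} (e : OrthonormalBasis (Fin n) ℂ (EuclideanSpace ℂ (Fin n)))
    (c : ℝ) : (c • (1 : EuclideanSpace ℂ (Fin n) →ₗ[ℂ] EuclideanSpace ℂ (Fin n)))
      = Dg e (fun _ => (c : ℂ)) := by
  rw [← algebraMap_smul ℂ c (1 : EuclideanSpace ℂ (Fin n) →ₗ[ℂ] EuclideanSpace ℂ (Fin n)),
    ← Dg_one e, Dg_smul]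
  congr 1; funext i; simp [Algebra.smul_def]

lemma polyApply_DgR {n : ℕ} (e : OrthonormalBasis (Fin n) ℂ (EuclideanSpace ℂ (Fin n)))
    (a : Fin n → ℝ) (p : Polynomial ℝ) :
    polyApply p (∑ i, a i • rankOne (e i)) = ∑ i, (p.eval (a i)) • rankOne (e i) := by
  rw [DgR_eq, DgR_eq]
  unfold polyApply
  rw [aeval_Dg]
  congr 1; funext i
  rw [Polynomial.eval_map, show ((a i : ℂ)) = algebraMap ℝ ℂ (a i) from rfl,
    Polynomial.eval₂_hom]
  rfl

lemma DgR_injective {n : ℕ} (e : OrthonormalBasis (Fin n) ℂ (EuclideanSpace ℂ (Fin n)))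
    {a b : Fin n → ℝ} (h : (∑ i, a i • rankOne (e i)) = ∑ i, b i • rankOne (e i)) :
    a = b := by
  rw [DgR_eq, DgR_eq] at h
  have := Dg_injective e h
  funext j
  exact_mod_cast congrFun this j

lemma wd {n : ℕ} (e : ℕ → OrthonormalBasis (Fin n) ℂ (EuclideanSpace ℂ (Fin n)))
    (hinc : ∀ k l, k ≠ l →
      mkcAlgebra (e k) ∩ mkcAlgebra (e l) = {A | ∃ c : ℝ, A = c • (1 : _)})
    (f : ℕ → Fin n) {k l : ℕ} {a b : Fin n → ℝ}
    (h : (∑ i, a i • rankOne (e k i)) = ∑ i, b i • rankOne (e l i)) :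
    a (f k) = b (f l) := by
  by_cases hkl : k = l
  · subst hkl
    have := DgR_injective (e k) h
    subst this
    rfl
  · have hmem : (∑ i, a i • rankOne (e k i)) ∈ mkcAlgebra (e k) ∩ mkcAlgebra (e l) :=
      ⟨⟨a, rfl⟩, ⟨b, h⟩⟩
    rw [hinc k l hkl] at hmem
    obtain ⟨c, hc⟩ := hmem
    have ha : a = fun _ => c := by
      apply DgR_injective (e k)
      rw [hc, smul_one_eq (e k)]
      exact (DgR_eq (e k) fun _ => c).symm
    have hb : b = fun _ => c := by
      apply DgR_injective (e l)
      rw [← h, hc, smul_one_eq (e l)]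
      exact (DgR_eq (e l) fun _ => c).symm
    rw [ha, hb]

open Classical in
noncomputable def lamF {n : ℕ} (e : ℕ → OrthonormalBasis (Fin n) ℂ (EuclideanSpace ℂ (Fin n)))
    (f : ℕ → Fin n) (B : EuclideanSpace ℂ (Fin n) →ₗ[ℂ] EuclideanSpace ℂ (Fin n)) : ℝ :=
  if h : ∃ k, ∃ a : Fin n → ℝ, B = ∑ i, a i • rankOne (e k i) then
    h.choose_spec.choose (f h.choose)
  else 0

lemma lamF_eq {n : ℕ} (e : ℕ → OrthonormalBasis (Fin n) ℂ (EuclideanSpace ℂ (Fin n)))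
    (hinc : ∀ k l, k ≠ l →
      mkcAlgebra (e k) ∩ mkcAlgebra (e l) = {A | ∃ c : ℝ, A = c • (1 : _)})
    (f : ℕ → Fin n) (k : ℕ) (a : Fin n → ℝ) :
    lamF e f (∑ i, a i • rankOne (e k i)) = a (f k) := by
  have h : ∃ k', ∃ a' : Fin n → ℝ,
      (∑ i, a i • rankOne (e k i)) = ∑ i, a' i • rankOne (e k' i) := ⟨k, a, rfl⟩
  rw [lamF, dif_pos h]
  exact wd e hinc f h.choose_spec.choose_spec.symm


/-- The set of colorings of the MKC observable set is in bijection with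
`{1,…,n}^ℕ`, via `f ↦ λ_f` where `λ_f(Σᵢ aᵢ P_{e_{k,i}}) = a_{f(k)}`. -/
theorem mkc_colorings_equiv {n : ℕ}
    (e : ℕ → OrthonormalBasis (Fin n) ℂ (EuclideanSpace ℂ (Fin n)))
    (hinc : ∀ k l, k ≠ l →
      mkcAlgebra (e k) ∩ mkcAlgebra (e l) = {A | ∃ c : ℝ, A = c • (1 : _)})
    (Obs : Set (EuclideanSpace ℂ (Fin n) →ₗ[ℂ] EuclideanSpace ℂ (Fin n)))
    (hObs : Obs = ⋃ k, mkcAlgebra (e k)) :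
    ∃ F : (ℕ → Fin n) ≃ Colorings Obs,
      ∀ f : ℕ → Fin n, ∀ k, ∀ a : Fin n → ℝ,
        (¬ ∃ c : ℝ, (∑ i, a i • rankOne (e k i)) = c • (1 : _)) →
        (F f : (EuclideanSpace ℂ (Fin n) →ₗ[ℂ] EuclideanSpace ℂ (Fin n)) → ℝ)
          (∑ i, a i • rankOne (e k i)) = a (f k) := by
  classical
  have hmem : ∀ A, A ∈ Obs ↔ ∃ k, ∃ a : Fin n → ℝ, A = ∑ i, a i • rankOne (e k i) := by
    intro A
    rw [hObs]
    simp [mkcAlgebra, Set.mem_iUnion]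
  have hcol : ∀ f : ℕ → Fin n, lamF e f ∈ Colorings Obs := by
    intro f
    refine ⟨?_, ?_, ?_⟩
    · intro A hA
      obtain ⟨k, a, rfl⟩ := (hmem A).mp hA
      rw [lamF_eq e hinc f k a]
      rw [show (∑ i, a i • rankOne (e k i)) = Dg (e k) (fun i => (a i : ℂ)) from DgR_eq _ _]
      exact (mem_spectrum_Dg_iff (e k) _ _).mpr ⟨f k, rfl⟩
    · intro p A hA _
      obtain ⟨k, a, rfl⟩ := (hmem A).mp hA
      rw [polyApply_DgR, lamF_eq e hinc, lamF_eq e hinc]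
    · intro A hA
      rw [lamF, dif_neg]
      intro h
      exact hA ((hmem A).mpr h)
  set G : (ℕ → Fin n) → Colorings Obs := fun f => ⟨lamF e f, hcol f⟩ with hG
  have hGinj : Function.Injective G := by
    intro f g hfg
    funext k
    have h1 : lamF e f = lamF e g := congrArg Subtype.val hfg
    have h2 := lamF_eq e hinc f k (fun i : Fin n => (i.val : ℝ))
    have h3 := lamF_eq e hinc g k (fun i : Fin n => (i.val : ℝ))
    rw [h1, h3] at h2
    exact (Fin.val_injective (Nat.cast_injective h2)).symm
  have hGsurj : Function.Surjective G := by
    rintro ⟨lam, h1, h2, h3⟩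
    have hex : ∀ k, ∃ j : Fin n,
        lam (∑ i : Fin n, (i.val : ℝ) • rankOne (e k i)) = ((j : ℕ) : ℝ) := by
      intro k
      have hA : (∑ i : Fin n, (i.val : ℝ) • rankOne (e k i)) ∈ Obs := (hmem _).mpr ⟨k, _, rfl⟩
      have hs : ((lam (∑ i : Fin n, (i.val : ℝ) • rankOne (e k i)) : ℝ) : ℂ)
          ∈ spectrum ℂ (Dg (e k) (fun i : Fin n => ((i.val : ℝ) : ℂ))) := by
        rw [← DgR_eq]
        exact h1 _ hA
      obtain ⟨j, hj⟩ := (mem_spectrum_Dg_iff _ _ _).mp hs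
      exact ⟨j, by exact_mod_cast hj⟩
    set f : ℕ → Fin n := fun k => (hex k).choose with hf
    refine ⟨f, ?_⟩
    apply Subtype.ext
    funext B
    show lamF e f B = lam B
    by_cases hB : ∃ k, ∃ a : Fin n → ℝ, B = ∑ i, a i • rankOne (e k i)
    · obtain ⟨k, a, rfl⟩ := hB
      have hvinj : Set.InjOn (fun i : Fin n => (i.val : ℝ)) (Finset.univ : Finset (Fin n)) := by
        intro i _ j _ hij
        exact Fin.val_injective (Nat.cast_injective hij)
      set p := Lagrange.interpolate Finset.univ (fun i : Fin n => (i.val : ℝ)) a with hp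
      have hpe : ∀ i : Fin n, p.eval (i.val : ℝ) = a i := fun i =>
        Lagrange.eval_interpolate_at_node a hvinj (Finset.mem_univ i)
      have hPA : polyApply p (∑ i : Fin n, (i.val : ℝ) • rankOne (e k i))
          = ∑ i, a i • rankOne (e k i) := by
        rw [polyApply_DgR]
        exact Finset.sum_congr rfl fun i _ => by rw [hpe i]
      have hA0 : (∑ i : Fin n, (i.val : ℝ) • rankOne (e k i)) ∈ Obs := (hmem _).mpr ⟨k, _, rfl⟩
      have hB' : (∑ i, a i • rankOne (e k i)) ∈ Obs := (hmem _).mpr ⟨k, a, rfl⟩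
      have heval := h2 p _ hA0 (by rw [hPA]; exact hB')
      rw [hPA] at heval
      rw [lamF_eq e hinc f k a, heval, (hex k).choose_spec, hpe (f k)]
    · rw [lamF, dif_neg hB]
      exact (h3 B (fun h => hB ((hmem B).mp h))).symm
  refine ⟨Equiv.ofBijective G ⟨hGinj, hGsurj⟩, ?_⟩
  intro f k a _
  exact lamF_eq e hinc f k a
end

section
/- For any assignment of values v_{ij} ∈ {−1,1} to the nine cells of a 3×3 array, defining Rₖ = vₖ₁vₖ₂vₖ₃ and Cₖ = v₁ₖv₂ₖv₃ₖ, one has R₁ + R₂ + R₃ + C₁ + C₂ − C₃ ≤ 4. Consequently, for any probability distribution over such assignments, 𝔼(R₁)+𝔼(R₂)+𝔼(R₃)+𝔼(C₁)+𝔼(C₂)−𝔼(C₃) ≤ 4. -/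
/-!
Every cell of the square lies in exactly one row and one column, so the product of the three row
products and the three column products is a product of squares of signs, hence `1`. Six signs
with product `1` cannot take the maximizing values `1, 1, 1, 1, 1, -1`, and moving any single
sign away from its maximizing value lowers `R₁ + R₂ + R₃ + C₁ + C₂ - C₃` by `2`. The bound on
expectations follows by integrating the pointwise bound.
-/

open MeasureTheory

theorem mul_eq_one_or_eq_neg_one {M : Type*} [Monoid M] [HasDistribNeg M] {x y : M}
    (hx : x = 1 ∨ x = -1) (hy : y = 1 ∨ y = -1) : x * y = 1 ∨ x * y = -1 := by
  rcases hx with rfl | rfl <;> rcases hy with rfl | rfl <;> simp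

theorem add_sub_le_four_of_mul_eq_one {R : Type*} [CommRing R] [LinearOrder R]
    [IsStrictOrderedRing R] {a b c d e f : R} (ha : a = 1 ∨ a = -1)
    (hb : b = 1 ∨ b = -1) (hc : c = 1 ∨ c = -1) (hd : d = 1 ∨ d = -1) (he : e = 1 ∨ e = -1)
    (hf : f = 1 ∨ f = -1) (hprod : a * b * c * d * e * f = 1) :
    a + b + c + d + e - f ≤ 4 := by
  have le_one {x : R} (hx : x = 1 ∨ x = -1) : x ≤ 1 := by rcases hx with rfl | rfl <;> norm_num
  have neg_one_le {x : R} (hx : x = 1 ∨ x = -1) : -1 ≤ x := by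
    rcases hx with rfl | rfl <;> norm_num
  by_contra! h
  obtain rfl : a = 1 := ha.resolve_right fun ha => by
    linarith [le_one hb, le_one hc, le_one hd, le_one he, neg_one_le hf]
  obtain rfl : b = 1 := hb.resolve_right fun hb => by
    linarith [le_one hc, le_one hd, le_one he, neg_one_le hf]
  obtain rfl : c = 1 := hc.resolve_right fun hc => by linarith [le_one hd, le_one he, neg_one_le hf]
  obtain rfl : d = 1 := hd.resolve_right fun hd => by linarith [le_one he, neg_one_le hf]
  obtain rfl : e = 1 := he.resolve_right fun he => by linarith [neg_one_le hf]
  obtain rfl : f = -1 := hf.resolve_left fun hf => by linarith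
  norm_num at hprod

section MerminPeres

variable {R : Type*}

def rowProd [Mul R] (v : Fin 3 → Fin 3 → R) (i : Fin 3) : R := v i 0 * v i 1 * v i 2

def colProd [Mul R] (v : Fin 3 → Fin 3 → R) (j : Fin 3) : R := v 0 j * v 1 j * v 2 j

theorem rowProd_eq_one_or_eq_neg_one [Monoid R] [HasDistribNeg R] {v : Fin 3 → Fin 3 → R}
    (hv : ∀ i j, v i j = 1 ∨ v i j = -1) (i : Fin 3) : rowProd v i = 1 ∨ rowProd v i = -1 :=
  mul_eq_one_or_eq_neg_one (mul_eq_one_or_eq_neg_one (hv i 0) (hv i 1)) (hv i 2)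

theorem colProd_eq_one_or_eq_neg_one [Monoid R] [HasDistribNeg R] {v : Fin 3 → Fin 3 → R}
    (hv : ∀ i j, v i j = 1 ∨ v i j = -1) (j : Fin 3) : colProd v j = 1 ∨ colProd v j = -1 :=
  mul_eq_one_or_eq_neg_one (mul_eq_one_or_eq_neg_one (hv 0 j) (hv 1 j)) (hv 2 j)

theorem rowProd_mul_colProd_eq_prod_sq [CommRing R] (v : Fin 3 → Fin 3 → R) :
    rowProd v 0 * rowProd v 1 * rowProd v 2 * colProd v 0 * colProd v 1 * colProd v 2 =
      ∏ i, ∏ j, v i j ^ 2 := by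
  simp only [rowProd, colProd, Fin.prod_univ_three]
  ring

theorem rowProd_mul_colProd_eq_one [CommRing R] {v : Fin 3 → Fin 3 → R}
    (hv : ∀ i j, v i j = 1 ∨ v i j = -1) :
    rowProd v 0 * rowProd v 1 * rowProd v 2 * colProd v 0 * colProd v 1 * colProd v 2 = 1 := by
  rw [rowProd_mul_colProd_eq_prod_sq]
  refine Finset.prod_eq_one fun i _ => Finset.prod_eq_one fun j _ => ?_
  rcases hv i j with h | h <;> simp [h]

theorem rowProd_add_colProd_le_four [CommRing R] [LinearOrder R] [IsStrictOrderedRing R]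
    {v : Fin 3 → Fin 3 → R} (hv : ∀ i j, v i j = 1 ∨ v i j = -1) :
    rowProd v 0 + rowProd v 1 + rowProd v 2 + colProd v 0 + colProd v 1 - colProd v 2 ≤ 4 :=
  add_sub_le_four_of_mul_eq_one (rowProd_eq_one_or_eq_neg_one hv 0)
    (rowProd_eq_one_or_eq_neg_one hv 1) (rowProd_eq_one_or_eq_neg_one hv 2)
    (colProd_eq_one_or_eq_neg_one hv 0) (colProd_eq_one_or_eq_neg_one hv 1)
    (colProd_eq_one_or_eq_neg_one hv 2) (rowProd_mul_colProd_eq_one hv)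

end MerminPeres

theorem MeasureTheory.Integrable.of_eq_one_or_eq_neg_one {Ω : Type*} [MeasurableSpace Ω]
    {μ : Measure Ω} [IsFiniteMeasure μ] {f : Ω → ℝ} (hf : Measurable f)
    (h : ∀ ω, f ω = 1 ∨ f ω = -1) : Integrable f μ :=
  .of_bound hf.aestronglyMeasurable 1 <| ae_of_all _ fun ω => by rcases h ω with h | h <;> simp [h]

/-- Cabello's non-contextuality inequality from the Mermin-Peres square:
for any assignment `v : 3×3 → {−1,1}`, with `Rₖ` the row products and `Cₖ` the
column products, `R₁+R₂+R₃+C₁+C₂−C₃ ≤ 4`; consequently, for any probability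
distribution over such assignments (a random field `V` with values `±1`),
`𝔼(R₁)+𝔼(R₂)+𝔼(R₃)+𝔼(C₁)+𝔼(C₂)−𝔼(C₃) ≤ 4`. -/
theorem cabello_inequality :
    (∀ v : Fin 3 → Fin 3 → ℝ, (∀ i j, v i j = 1 ∨ v i j = -1) →
      (v 0 0 * v 0 1 * v 0 2) + (v 1 0 * v 1 1 * v 1 2) + (v 2 0 * v 2 1 * v 2 2)
        + (v 0 0 * v 1 0 * v 2 0) + (v 0 1 * v 1 1 * v 2 1)
        - (v 0 2 * v 1 2 * v 2 2) ≤ 4) ∧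
    (∀ (Ω : Type) (_ : MeasurableSpace Ω) (μ : Measure Ω), IsProbabilityMeasure μ →
      ∀ V : Ω → Fin 3 → Fin 3 → ℝ,
        (∀ i j, Measurable fun ω => V ω i j) →
        (∀ ω i j, V ω i j = 1 ∨ V ω i j = -1) →
        (∫ ω, V ω 0 0 * V ω 0 1 * V ω 0 2 ∂μ)
          + (∫ ω, V ω 1 0 * V ω 1 1 * V ω 1 2 ∂μ)
          + (∫ ω, V ω 2 0 * V ω 2 1 * V ω 2 2 ∂μ)
          + (∫ ω, V ω 0 0 * V ω 1 0 * V ω 2 0 ∂μ)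
          + (∫ ω, V ω 0 1 * V ω 1 1 * V ω 2 1 ∂μ)
          - (∫ ω, V ω 0 2 * V ω 1 2 * V ω 2 2 ∂μ) ≤ 4) := by
  refine ⟨fun v hv => rowProd_add_colProd_le_four hv, ?_⟩
  intro Ω _ μ _ V hmeas hV
  have hint (i j k l m n : Fin 3) : Integrable (fun ω => V ω i j * V ω k l * V ω m n) μ :=
    .of_eq_one_or_eq_neg_one (by fun_prop) fun ω =>
      mul_eq_one_or_eq_neg_one (mul_eq_one_or_eq_neg_one (hV ω i j) (hV ω k l)) (hV ω m n)
  rw [← integral_add (hint ..) (hint ..), ← integral_add (by fun_prop) (hint ..),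
    ← integral_add (by fun_prop) (hint ..), ← integral_add (by fun_prop) (hint ..),
    ← integral_sub (by fun_prop) (hint ..)]
  refine (integral_mono (by fun_prop) (integrable_const (4 : ℝ)) fun ω => ?_).trans_eq (by simp)
  exact rowProd_add_colProd_le_four (hV ω)
end

section
/- If four random variables A, A', B, B' defined on a common probability space each take values in {−1,1}, then |𝔼(AB) + 𝔼(AB') + 𝔼(A'B) − 𝔼(A'B')| ≤ 2 (the CHSH inequality); moreover the pointwise bound AB + AB' + A'B − A'B' ∈ {−2, 2} holds for every sample point. -/
/-!
Splitting on `b' = b` or `b' = -b`, the CHSH combination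
`a b + a b' + a' b - a' b' = a (b + b') + a' (b - b')` is `2 a b` or `2 a' b`, hence `±2` at every
sample point. Averaging a function bounded by `2` over a probability measure gives the bound on the
expectations, which may be split term by term because each product is a bounded measurable function.
-/

open MeasureTheory

section Sign

variable {R : Type*} [CommRing R] {a a' b b' : R}

lemma mul_eq_one_or_neg_one (ha : a = 1 ∨ a = -1) (hb : b = 1 ∨ b = -1) :
    a * b = 1 ∨ a * b = -1 := by
  rcases ha with rfl | rfl <;> rcases hb with rfl | rfl <;> simp

lemma chsh_eq_two_or_neg_two (ha : a = 1 ∨ a = -1) (ha' : a' = 1 ∨ a' = -1)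
    (hb : b = 1 ∨ b = -1) (hb' : b' = 1 ∨ b' = -1) :
    a * b + a * b' + a' * b - a' * b' = 2 ∨ a * b + a * b' + a' * b - a' * b' = -2 := by
  have hbb' : b' = b ∨ b' = -b := by
    rcases hb with rfl | rfl <;> rcases hb' with rfl | rfl <;> simp
  rcases hbb' with rfl | rfl
  · rcases mul_eq_one_or_neg_one ha hb with h | h
    · left; linear_combination 2 * h
    · right; linear_combination 2 * h
  · rcases mul_eq_one_or_neg_one ha' hb with h | h
    · left; linear_combination 2 * h
    · right; linear_combination 2 * h

end Sign

lemma integrable_mul_of_eq_one_or_neg_one {Ω : Type*} [MeasurableSpace Ω] {μ : Measure Ω}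
    [IsFiniteMeasure μ] {X Y : Ω → ℝ} (hX : Measurable X) (hY : Measurable Y)
    (hXv : ∀ ω, X ω = 1 ∨ X ω = -1) (hYv : ∀ ω, Y ω = 1 ∨ Y ω = -1) :
    Integrable (fun ω => X ω * Y ω) μ :=
  Integrable.of_bound (hX.mul hY).aestronglyMeasurable 1 <| ae_of_all _ fun ω => by
    rcases mul_eq_one_or_neg_one (hXv ω) (hYv ω) with h | h <;> simp [h]

/-- The CHSH inequality: if `A, A', B, B'` are `{−1,1}`-valued random variables
on a common probability space, then
`|𝔼(AB) + 𝔼(AB') + 𝔼(A'B) − 𝔼(A'B')| ≤ 2`; moreover the pointwise bound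
`AB + AB' + A'B − A'B' ∈ {−2, 2}` holds at every sample point. -/
theorem chsh_inequality {Ω : Type} [MeasurableSpace Ω]
    (μ : Measure Ω) [IsProbabilityMeasure μ]
    (A A' B B' : Ω → ℝ)
    (hA : Measurable A) (hA' : Measurable A')
    (hB : Measurable B) (hB' : Measurable B')
    (hAv : ∀ ω, A ω = 1 ∨ A ω = -1) (hA'v : ∀ ω, A' ω = 1 ∨ A' ω = -1)
    (hBv : ∀ ω, B ω = 1 ∨ B ω = -1) (hB'v : ∀ ω, B' ω = 1 ∨ B' ω = -1) :
    |(∫ ω, A ω * B ω ∂μ) + (∫ ω, A ω * B' ω ∂μ)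
        + (∫ ω, A' ω * B ω ∂μ) - (∫ ω, A' ω * B' ω ∂μ)| ≤ 2 ∧
    ∀ ω, A ω * B ω + A ω * B' ω + A' ω * B ω - A' ω * B' ω = 2 ∨
      A ω * B ω + A ω * B' ω + A' ω * B ω - A' ω * B' ω = -2 := by
  have hpointwise : ∀ ω, A ω * B ω + A ω * B' ω + A' ω * B ω - A' ω * B' ω = 2 ∨
      A ω * B ω + A ω * B' ω + A' ω * B ω - A' ω * B' ω = -2 := fun ω =>
    chsh_eq_two_or_neg_two (hAv ω) (hA'v ω) (hBv ω) (hB'v ω)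
  refine ⟨?_, hpointwise⟩
  have iAB := integrable_mul_of_eq_one_or_neg_one (μ := μ) hA hB hAv hBv
  have iAB' := integrable_mul_of_eq_one_or_neg_one (μ := μ) hA hB' hAv hB'v
  have iA'B := integrable_mul_of_eq_one_or_neg_one (μ := μ) hA' hB hA'v hBv
  have iA'B' := integrable_mul_of_eq_one_or_neg_one (μ := μ) hA' hB' hA'v hB'v
  have hsplit : ∫ ω, (A ω * B ω + A ω * B' ω + A' ω * B ω - A' ω * B' ω) ∂μ
      = (∫ ω, A ω * B ω ∂μ) + (∫ ω, A ω * B' ω ∂μ)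
        + (∫ ω, A' ω * B ω ∂μ) - (∫ ω, A' ω * B' ω ∂μ) := by
    rw [← integral_add iAB iAB', ← integral_add (iAB.fun_add iAB') iA'B,
      ← integral_sub ((iAB.fun_add iAB').fun_add iA'B) iA'B']
  have hbound : ∀ᵐ ω ∂μ, ‖A ω * B ω + A ω * B' ω + A' ω * B ω - A' ω * B' ω‖ ≤ 2 :=
    ae_of_all _ fun ω => by rcases hpointwise ω with h | h <;> simp [h]
  simpa [hsplit] using norm_integral_le_of_norm_le_const hbound
end

section
/- In the parity-oblivious multiplexing protocol with the qubit states ρ_{a₁a₂} = ½(id + (−1)^{a₁}(1/√2)σₓ + (−1)^{a₂}(1/√2)σ_y), Bob's strategy of measuring σₓ when b=1 and σ_y when b=2 and guessing a_b = 0 on outcome +1 succeeds with probability ½ + (1/(2√2)) = ½ + ¼√2 for every pair (a₁,a₂) and every b ∈ {1,2}. -/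
open Matrix Complex

noncomputable def σx : Matrix (Fin 2) (Fin 2) ℂ := !![0, 1; 1, 0]
noncomputable def σy : Matrix (Fin 2) (Fin 2) ℂ := !![0, -I; I, 0]

/-- The qubit states of the parity-oblivious multiplexing protocol. -/
noncomputable def rhoPOM (a₁ a₂ : Fin 2) : Matrix (Fin 2) (Fin 2) ℂ :=
  (2 : ℂ)⁻¹ • ((1 : Matrix (Fin 2) (Fin 2) ℂ)
    + ((((-1 : ℝ) ^ (a₁ : ℕ) / Real.sqrt 2 : ℝ) : ℂ)) • σx
    + ((((-1 : ℝ) ^ (a₂ : ℕ) / Real.sqrt 2 : ℝ) : ℂ)) • σy)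

/-- Bob's success probability in the parity-oblivious multiplexing protocol:
measuring `σₓ` when `b = 1` and `σ_y` when `b = 2`, and guessing `a_b = 0` on
outcome `+1` (i.e. using the effect `½(id + σ)` if `a_b = 0` and `½(id − σ)` if
`a_b = 1`), he succeeds with probability `½ + ¼√2` for every `(a₁,a₂)` and
every `b`. -/
theorem pom_quantum_success_probability :
    ∀ a₁ a₂ : Fin 2,
      ((rhoPOM a₁ a₂ *
        ((2 : ℂ)⁻¹ • ((1 : Matrix (Fin 2) (Fin 2) ℂ)
          + (if a₁ = 0 then σx else -σx)))).trace).re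
        = 1/2 + Real.sqrt 2 / 4 ∧
      ((rhoPOM a₁ a₂ *
        ((2 : ℂ)⁻¹ • ((1 : Matrix (Fin 2) (Fin 2) ℂ)
          + (if a₂ = 0 then σy else -σy)))).trace).re
        = 1/2 + Real.sqrt 2 / 4 := by
  intro a₁ a₂
  have h2 : Real.sqrt 2 * Real.sqrt 2 = 2 := Real.mul_self_sqrt (by norm_num)
  fin_cases a₁ <;> fin_cases a₂ <;>
    constructor <;>
    · simp only [rhoPOM, σx, σy, Matrix.one_fin_two, Matrix.smul_of, Matrix.of_add_of,
        Fin.isValue]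
      norm_num [Matrix.trace_fin_two, Matrix.mul_apply, Fin.sum_univ_two, Matrix.one_apply,
        Matrix.smul_apply, Complex.add_re, Complex.mul_re, Complex.I_re, Complex.I_im,
        Complex.ofReal_re, Complex.ofReal_im, div_eq_mul_inv]
      ring_nf
end
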